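/- Let X be a probability distribution on {0,1}^{n1}, Y a probability distribution on {0,1}^{n2}, and f : {0,1}^{n1} → {0,1}^{n2} a function such that every element of the support of Y lies in the image of f. If the statistical distance between the pushforward f(X) and Y is at most ε for some 0 < ε < 1, then there exists a probability distribution X' on {0,1}^{n1} such that the statistical distance between X' and X is at most ε and Y = f(X'). -/

import Mathlib

open Finset
open scoped Classical

noncomputable section

abbrev BS (n : ℕ) := Fin n → Bool

def uniformD (α : Type*) [Fintype α] : α → ℝ := fun _ => (Fintype.card α : ℝ)⁻¹

def prodD {α β : Type*} (p : α → ℝ) (q : β → ℝ) : α × β → ℝ := fun z => p z.1 * q z.2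

def pushD {α β : Type*} [Fintype α] (f : α → β) (p : α → ℝ) : β → ℝ :=
  fun b => ∑ a, if f a = b then p a else 0

def SD {α : Type*} [Fintype α] (p q : α → ℝ) : ℝ := (∑ a, |p a - q a|) / 2

def IsDist {α : Type*} [Fintype α] (p : α → ℝ) : Prop := (∀ a, 0 ≤ p a) ∧ ∑ a, p a = 1

def mEntGe {α : Type*} (p : α → ℝ) (k : ℝ) : Prop := ∀ a, p a ≤ (2:ℝ) ^ (-k)

def IsNME {X Y M : Type*} [Fintype X] [Fintype Y] [Fintype M]
    (E : X → Y → M) (k ε : ℝ) : Prop :=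
  ∀ μX : X → ℝ, IsDist μX → mEntGe μX k →
    ∀ A : Y → Y, (∀ y, A y ≠ y) →
      SD (pushD (fun xy : X × Y => (E xy.1 xy.2, E xy.1 (A xy.2), xy.2)) (prodD μX (uniformD Y)))
         (prodD (uniformD M)
           (pushD (fun xy : X × Y => (E xy.1 (A xy.2), xy.2)) (prodD μX (uniformD Y)))) ≤ ε

def IsNMEr {X Y M : Type*} [Fintype X] [Fintype Y] [Fintype M]
    (r : ℕ) (E : X → Y → M) (k ε : ℝ) : Prop :=
  ∀ μX : X → ℝ, IsDist μX → mEntGe μX k →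
    ∀ A : Fin r → Y → Y, (∀ i y, A i y ≠ y) →
      SD (pushD (fun xy : X × Y =>
            (E xy.1 xy.2, fun i => E xy.1 (A i xy.2), xy.2)) (prodD μX (uniformD Y)))
         (prodD (uniformD M)
           (pushD (fun xy : X × Y =>
             ((fun i => E xy.1 (A i xy.2)), xy.2)) (prodD μX (uniformD Y)))) ≤ ε

/-! Pull `Y` back along `f` fibre by fibre: on the fibre over `b`, rescale `X` by `Y(b) / f(X)(b)`,
and if `f(X)` gives that fibre no mass, put all of `Y(b)` on one preimage of `b`. Then `f(X') = Y`,
and on every fibre the mass moved is exactly `|Y(b) - f(X)(b)|`, so `Δ(X', X) = Δ(f(X), Y) ≤ ε`. -/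

section Pullback

variable {α β : Type*} [Fintype α]

lemma pushD_eq_sum_fiber (f : α → β) (p : α → ℝ) (b : β) :
    pushD f p b = ∑ a with f a = b, p a :=
  (Finset.sum_filter _ _).symm

lemma sum_pushD [Fintype β] (f : α → β) (p : α → ℝ) : ∑ b, pushD f p b = ∑ a, p a := by
  simp only [pushD_eq_sum_fiber]
  exact Finset.sum_fiberwise _ _ _

lemma pushD_nonneg (f : α → β) {p : α → ℝ} (hp : ∀ a, 0 ≤ p a) (b : β) : 0 ≤ pushD f p b := by
  rw [pushD_eq_sum_fiber]
  exact Finset.sum_nonneg fun a _ => hp a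

lemma eq_zero_of_pushD_eq_zero {f : α → β} {p : α → ℝ} (hp : ∀ a, 0 ≤ p a) {b : β}
    (hb : pushD f p b = 0) {a : α} (ha : f a = b) : p a = 0 := by
  rw [pushD_eq_sum_fiber, Finset.sum_eq_zero_iff_of_nonneg fun a _ => hp a] at hb
  exact hb a (by simp [ha])

/-- `s b` is the preimage of `b` that receives the mass `q b` when `pushD f p b = 0`. -/
def pullD (f : α → β) (p : α → ℝ) (q : β → ℝ) (s : β → α) : α → ℝ := fun a =>
  if pushD f p (f a) = 0 then (if s (f a) = a then q (f a) else 0)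
  else p a * q (f a) / pushD f p (f a)

variable {f : α → β} {p : α → ℝ} {q : β → ℝ} {s : β → α}

lemma pullD_nonneg (hp : ∀ a, 0 ≤ p a) (hq : ∀ b, 0 ≤ q b) (a : α) : 0 ≤ pullD f p q s a := by
  unfold pullD
  split_ifs
  exacts [hq _, le_rfl, div_nonneg (mul_nonneg (hp a) (hq _)) (pushD_nonneg f hp _)]

lemma pushD_pullD (hs : ∀ b, q b ≠ 0 → f (s b) = b) (b : β) : pushD f (pullD f p q s) b = q b := by
  rw [pushD_eq_sum_fiber]
  by_cases hb : pushD f p b = 0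
  · have hfiber : ∀ a ∈ ({a | f a = b} : Finset α),
        pullD f p q s a = if s b = a then q b else 0 := by
      intro a ha
      simp only [Finset.mem_filter_univ] at ha
      simp [pullD, ha, hb]
    rw [Finset.sum_congr rfl hfiber, Finset.sum_ite_eq]
    by_cases hqb : q b = 0
    · simp [hqb]
    · simp [hs b hqb]
  · have hfiber : ∀ a ∈ ({a | f a = b} : Finset α),
        pullD f p q s a = p a * (q b / pushD f p b) := by
      intro a ha
      simp only [Finset.mem_filter_univ] at ha
      simp [pullD, ha, hb, mul_div_assoc]
    rw [Finset.sum_congr rfl hfiber, ← Finset.sum_mul, ← pushD_eq_sum_fiber]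
    field_simp

lemma sum_fiber_abs_pullD_sub (hp : ∀ a, 0 ≤ p a) (hq : ∀ b, 0 ≤ q b)
    (hs : ∀ b, q b ≠ 0 → f (s b) = b) (b : β) :
    ∑ a with f a = b, |pullD f p q s a - p a| = |q b - pushD f p b| := by
  by_cases hb : pushD f p b = 0
  · have hfiber : ∀ a ∈ ({a | f a = b} : Finset α),
        |pullD f p q s a - p a| = pullD f p q s a := by
      intro a ha
      simp only [Finset.mem_filter_univ] at ha
      rw [eq_zero_of_pushD_eq_zero hp hb ha, sub_zero, abs_of_nonneg (pullD_nonneg hp hq a)]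
    rw [Finset.sum_congr rfl hfiber, ← pushD_eq_sum_fiber, pushD_pullD hs, hb, sub_zero,
      abs_of_nonneg (hq b)]
  · have hpos : 0 < pushD f p b := (pushD_nonneg f hp b).lt_of_ne' hb
    have hfiber : ∀ a ∈ ({a | f a = b} : Finset α),
        |pullD f p q s a - p a| = p a * (|q b - pushD f p b| / pushD f p b) := by
      intro a ha
      simp only [Finset.mem_filter_univ] at ha
      have hdiff : pullD f p q s a - p a = p a * ((q b - pushD f p b) / pushD f p b) := by
        simp only [pullD, ha, if_neg hb]
        field_simp
      rw [hdiff, abs_mul, abs_of_nonneg (hp a), abs_div, abs_of_pos hpos]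
    rw [Finset.sum_congr rfl hfiber, ← Finset.sum_mul, ← pushD_eq_sum_fiber]
    field_simp

lemma isDist_pullD [Fintype β] (hp : ∀ a, 0 ≤ p a) (hq : IsDist q)
    (hs : ∀ b, q b ≠ 0 → f (s b) = b) :
    IsDist (pullD f p q s) := by
  refine ⟨pullD_nonneg hp hq.1, ?_⟩
  rw [← sum_pushD f, Finset.sum_congr rfl fun b _ => pushD_pullD hs b, hq.2]

lemma SD_pullD [Fintype β] (hp : ∀ a, 0 ≤ p a) (hq : ∀ b, 0 ≤ q b)
    (hs : ∀ b, q b ≠ 0 → f (s b) = b) :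
    SD (pullD f p q s) p = SD (pushD f p) q := by
  unfold SD
  rw [← Finset.sum_fiberwise Finset.univ f]
  congr 1
  refine Finset.sum_congr rfl fun b _ => ?_
  rw [sum_fiber_abs_pullD_sub hp hq hs, abs_sub_comm]

end Pullback

theorem stmt_6_general
    (n1 n2 : ℕ)
    (μX : BS n1 → ℝ) (hX : IsDist μX)
    (μY : BS n2 → ℝ) (hY : IsDist μY)
    (f : BS n1 → BS n2)
    (hsupp : ∀ b, μY b ≠ 0 → ∃ a, f a = b)
    (ε : ℝ)
    (hsd : SD (pushD f μX) μY ≤ ε) :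
    ∃ μX' : BS n1 → ℝ, IsDist μX' ∧ SD μX' μX ≤ ε ∧ μY = pushD f μX' := by
  choose! s hs using hsupp
  exact ⟨pullD f μX μY s, isDist_pullD hX.1 hY hs, (SD_pullD hX.1 hY.1 hs).trans_le hsd,
    (funext (pushD_pullD hs)).symm⟩

theorem stmt_6
    (n1 n2 : ℕ)
    (μX : BS n1 → ℝ) (hX : IsDist μX)
    (μY : BS n2 → ℝ) (hY : IsDist μY)
    (f : BS n1 → BS n2)
    (hsupp : ∀ b, μY b ≠ 0 → ∃ a, f a = b)
    (ε : ℝ) (hε0 : 0 < ε) (hε1 : ε < 1)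
    (hsd : SD (pushD f μX) μY ≤ ε) :
    ∃ μX' : BS n1 → ℝ, IsDist μX' ∧ SD μX' μX ≤ ε ∧ μY = pushD f μX' :=
  stmt_6_general n1 n2 μX hX μY hY f hsupp ε hsd

end
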